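/- Let q, x, y₁, y₂, z be complex numbers with |q| < 1. Define H(β₁,β₂,β₃,β₄) = Σ_{n₁,n₂,n₃,n₄ ≥ 0} x^{n₁+n₂+n₃+n₄} y₁^{n₃} y₂^{n₄} z^{n₂} q^{Q(n₁,n₂,n₃,n₄) + β₁n₁ + β₂n₂ + β₃n₃ + β₄n₄} / ((q²;q²)_{n₁}(q²;q²)_{n₂}(q⁴;q⁴)_{n₃}(q⁴;q⁴)_{n₄}). Then: (1) H(1,1,2,4) = H(5,5,6,8) + x(1+z)q·H(5,7,6,8) + xy₁q²·H(7,7,6,8) + x(1+z)q³·H(7,9,10,8) + xy₂q⁴·H(9,9,10,12); (2) H(1,3,2,4) = H(5,5,6,8) + xq·H(5,7,6,8) + xy₁q²·H(7,7,6,8) + x(1+z)q³·H(7,9,10,8) + xy₂q⁴·H(9,9,10,12); (3) H(3,3,2,4) = H(5,5,6,8) + xy₁q²·H(7,7,6,8) + x(1+z)q³·H(7,9,10,8) + xy₂q⁴·H(9,9,10,12); (4) H(3,5,6,4) = H(5,5,6,8) + xq³·H(7,9,10,8) + xy₂q⁴·H(9,9,10,12). -/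

import Mathlib

/-! Since `(p; p)_{n+1} = (p; p)_n (1 - p^{n+1})`, splitting the summand of `H` with `nᵢ = m + 1`
according to `1 = p^{m+1} + (1 - p^{m+1})` (with `p = q²` for `i = 1, 2` and `p = q⁴` for
`i = 3, 4`) turns it into the summand of `H` with `βᵢ` raised by 2 or 4, plus a monomial times the
summand at `nᵢ = m`; the increments of `Q` under `nᵢ ↦ nᵢ + 1` give the new exponents. The terms
with `nᵢ = 0` do not depend on `βᵢ`, so summing gives four shift relations for `H`, and each
recurrence is a telescoped chain of them. All series converge absolutely for `|q| < 1`, since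
`q^{Q(n)}` decays like `∏ |q|^{C(nᵢ,2)}` while `1 / |(p; p)_n| ≤ (1 - |p|)^{-n}`. -/

/-- The finite q-Pochhammer symbol `(a; q)_n = ∏_{k=0}^{n-1} (1 - a q^k)`. -/
noncomputable def qPoch (a q : ℂ) (n : ℕ) : ℂ :=
  ∏ k ∈ Finset.range n, (1 - a * q ^ k)

/-- The quadratic form `Q(n₁,n₂,n₃,n₄)`. -/
def Qform (n₁ n₂ n₃ n₄ : ℕ) : ℕ :=
  4 * Nat.choose n₁ 2 + 6 * Nat.choose n₂ 2 + 4 * Nat.choose n₃ 2 + 8 * Nat.choose n₄ 2 +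
    4 * (n₁ * n₂ + n₁ * n₃ + n₁ * n₄ + n₂ * n₃ + n₂ * n₄ + n₃ * n₄)

/-- The quadruple summation
`H(β₁,β₂,β₃,β₄) = Σ_{n₁,n₂,n₃,n₄ ≥ 0} x^{n₁+n₂+n₃+n₄} y₁^{n₃} y₂^{n₄} z^{n₂}
  q^{Q(n₁,n₂,n₃,n₄) + β₁n₁ + β₂n₂ + β₃n₃ + β₄n₄}
  / ((q²;q²)_{n₁}(q²;q²)_{n₂}(q⁴;q⁴)_{n₃}(q⁴;q⁴)_{n₄})`. -/
noncomputable def Hquad (q x y₁ y₂ z : ℂ) (β₁ β₂ β₃ β₄ : ℕ) : ℂ :=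
  ∑' n : ℕ × ℕ × ℕ × ℕ,
    x ^ (n.1 + n.2.1 + n.2.2.1 + n.2.2.2) * y₁ ^ n.2.2.1 * y₂ ^ n.2.2.2 * z ^ n.2.1 *
      q ^ (Qform n.1 n.2.1 n.2.2.1 n.2.2.2 +
        β₁ * n.1 + β₂ * n.2.1 + β₃ * n.2.2.1 + β₄ * n.2.2.2) /
      (qPoch (q ^ 2) (q ^ 2) n.1 * qPoch (q ^ 2) (q ^ 2) n.2.1 *
        qPoch (q ^ 4) (q ^ 4) n.2.2.1 * qPoch (q ^ 4) (q ^ 4) n.2.2.2)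

theorem tsum_eq_tsum_add_tsum_of_injective {α ι κ : Type*} [AddCommMonoid α] [TopologicalSpace α]
    [ContinuousAdd α] [T2Space α] {F G : ι → α} {F' : κ → α} {i : κ → ι}
    (hi : Function.Injective i) (hG : Summable G) (hF' : Summable F')
    (h_off : ∀ n ∉ Set.range i, F n = G n) (h_on : ∀ m, F (i m) = G (i m) + F' m) :
    ∑' n, F n = ∑' n, G n + ∑' m, F' m := by
  have hF : F = G + Function.extend i F' 0 := by
    funext n
    by_cases hn : n ∈ Set.range i
    · obtain ⟨m, rfl⟩ := hn
      simp [h_on, hi.extend_apply]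
    · simp [h_off n hn, Function.extend_apply' _ _ _ hn]
  rw [hF]
  exact (hG.hasSum.add ((hasSum_extend_zero hi).2 hF'.hasSum)).tsum_eq

theorem summable_pow_mul_pow_choose_two (K : ℝ) {r : ℝ} (hr₀ : 0 ≤ r) (hr₁ : r < 1) :
    Summable fun n : ℕ => K ^ n * r ^ n.choose 2 := by
  refine summable_of_ratio_norm_eventually_le (r := 1 / 2) (by norm_num) ?_
  have h_ratio : Filter.Tendsto (fun n : ℕ => |K| * r ^ n) Filter.atTop (nhds 0) := by
    simpa using (tendsto_pow_atTop_nhds_zero_of_lt_one hr₀ hr₁).const_mul |K|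
  filter_upwards [h_ratio.eventually_le_const (by norm_num : (0 : ℝ) < 1 / 2)] with n hn
  have h_succ : K ^ (n + 1) * r ^ (n + 1).choose 2 = K * r ^ n * (K ^ n * r ^ n.choose 2) := by
    rw [Nat.choose_succ_succ', Nat.choose_one_right]
    ring
  rw [h_succ, norm_mul, norm_mul, norm_pow, Real.norm_eq_abs, Real.norm_eq_abs, abs_of_nonneg hr₀]
  exact mul_le_mul_of_nonneg_right hn (norm_nonneg _)

theorem qPoch_succ (a c : ℂ) (n : ℕ) : qPoch a c (n + 1) = qPoch a c n * (1 - a * c ^ n) :=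
  Finset.prod_range_succ _ _

theorem one_sub_norm_pow_le_norm_qPoch {a c : ℂ} (ha : ‖a‖ ≤ 1) (hc : ‖c‖ ≤ 1) (n : ℕ) :
    (1 - ‖a‖) ^ n ≤ ‖qPoch a c n‖ := by
  calc (1 - ‖a‖) ^ n = ∏ _k ∈ Finset.range n, (1 - ‖a‖) := by simp
    _ ≤ ∏ k ∈ Finset.range n, ‖1 - a * c ^ k‖ := by
      refine Finset.prod_le_prod (fun _ _ => sub_nonneg.2 ha) fun k _ => ?_
      have h : ‖a * c ^ k‖ ≤ ‖a‖ := by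
        rw [norm_mul, norm_pow]
        exact mul_le_of_le_one_right (norm_nonneg a) (pow_le_one₀ (norm_nonneg c) hc)
      exact (sub_le_sub_left h 1).trans (by simpa using norm_sub_norm_le (1 : ℂ) (a * c ^ k))
    _ = ‖qPoch a c n‖ := (norm_prod _ _).symm

theorem qPoch_ne_zero {a c : ℂ} (ha : ‖a‖ < 1) (hc : ‖c‖ ≤ 1) (n : ℕ) : qPoch a c n ≠ 0 :=
  norm_pos_iff.mp <| (pow_pos (sub_pos.2 ha) n).trans_le <|
    one_sub_norm_pow_le_norm_qPoch ha.le hc n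

theorem qPoch_pow_ne_zero {q : ℂ} (hq : ‖q‖ < 1) {k : ℕ} (hk : k ≠ 0) (n : ℕ) :
    qPoch (q ^ k) (q ^ k) n ≠ 0 := by
  have h : ‖q ^ k‖ < 1 := by rw [norm_pow]; exact pow_lt_one₀ (norm_nonneg q) hq hk
  exact qPoch_ne_zero h h.le n

theorem Qform_succ₁ (n₁ n₂ n₃ n₄ : ℕ) :
    Qform (n₁ + 1) n₂ n₃ n₄ = Qform n₁ n₂ n₃ n₄ + 4 * (n₁ + n₂ + n₃ + n₄) := by
  simp only [Qform, Nat.choose_succ_succ', Nat.choose_one_right]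
  ring

theorem Qform_succ₂ (n₁ n₂ n₃ n₄ : ℕ) :
    Qform n₁ (n₂ + 1) n₃ n₄ = Qform n₁ n₂ n₃ n₄ + 4 * (n₁ + n₃ + n₄) + 6 * n₂ := by
  simp only [Qform, Nat.choose_succ_succ', Nat.choose_one_right]
  ring

theorem Qform_succ₃ (n₁ n₂ n₃ n₄ : ℕ) :
    Qform n₁ n₂ (n₃ + 1) n₄ = Qform n₁ n₂ n₃ n₄ + 4 * (n₁ + n₂ + n₃ + n₄) := by
  simp only [Qform, Nat.choose_succ_succ', Nat.choose_one_right]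
  ring

theorem Qform_succ₄ (n₁ n₂ n₃ n₄ : ℕ) :
    Qform n₁ n₂ n₃ (n₄ + 1) = Qform n₁ n₂ n₃ n₄ + 4 * (n₁ + n₂ + n₃) + 8 * n₄ := by
  simp only [Qform, Nat.choose_succ_succ', Nat.choose_one_right]
  ring

theorem choose_two_add_le_Qform_add (β₁ β₂ β₃ β₄ n₁ n₂ n₃ n₄ : ℕ) :
    n₁.choose 2 + n₂.choose 2 + n₃.choose 2 + n₄.choose 2 ≤
      Qform n₁ n₂ n₃ n₄ + β₁ * n₁ + β₂ * n₂ + β₃ * n₃ + β₄ * n₄ := by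
  unfold Qform
  omega

noncomputable def HquadTerm (q x y₁ y₂ z : ℂ) (β₁ β₂ β₃ β₄ : ℕ) (n : ℕ × ℕ × ℕ × ℕ) : ℂ :=
  x ^ (n.1 + n.2.1 + n.2.2.1 + n.2.2.2) * y₁ ^ n.2.2.1 * y₂ ^ n.2.2.2 * z ^ n.2.1 *
    q ^ (Qform n.1 n.2.1 n.2.2.1 n.2.2.2 +
      β₁ * n.1 + β₂ * n.2.1 + β₃ * n.2.2.1 + β₄ * n.2.2.2) /
    (qPoch (q ^ 2) (q ^ 2) n.1 * qPoch (q ^ 2) (q ^ 2) n.2.1 *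
      qPoch (q ^ 4) (q ^ 4) n.2.2.1 * qPoch (q ^ 4) (q ^ 4) n.2.2.2)

section HquadTerm

variable {q : ℂ} (x y₁ y₂ z : ℂ) (β₁ β₂ β₃ β₄ : ℕ)

theorem Hquad_eq_tsum :
    Hquad q x y₁ y₂ z β₁ β₂ β₃ β₄ = ∑' n, HquadTerm q x y₁ y₂ z β₁ β₂ β₃ β₄ n :=
  rfl

theorem norm_HquadTerm_le (hq : ‖q‖ < 1) (n : ℕ × ℕ × ℕ × ℕ) :
    ‖HquadTerm q x y₁ y₂ z β₁ β₂ β₃ β₄ n‖ ≤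
      (‖x‖ / (1 - ‖q‖ ^ 2)) ^ n.1 * ‖q‖ ^ n.1.choose 2 *
        ((‖x‖ * ‖z‖ / (1 - ‖q‖ ^ 2)) ^ n.2.1 * ‖q‖ ^ n.2.1.choose 2 *
          ((‖x‖ * ‖y₁‖ / (1 - ‖q‖ ^ 4)) ^ n.2.2.1 * ‖q‖ ^ n.2.2.1.choose 2 *
            ((‖x‖ * ‖y₂‖ / (1 - ‖q‖ ^ 4)) ^ n.2.2.2 * ‖q‖ ^ n.2.2.2.choose 2))) := by
  obtain ⟨n₁, n₂, n₃, n₄⟩ := n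
  set r := ‖q‖
  have hr₀ : 0 ≤ r := norm_nonneg q
  have hc₂ : 0 < 1 - r ^ 2 := sub_pos.2 (pow_lt_one₀ hr₀ hq two_ne_zero)
  have hc₄ : 0 < 1 - r ^ 4 := sub_pos.2 (pow_lt_one₀ hr₀ hq four_ne_zero)
  have hPoch : ∀ k m, (1 - r ^ k) ^ m ≤ ‖qPoch (q ^ k) (q ^ k) m‖ := fun k m => by
    have h : ‖q ^ k‖ ≤ 1 := by rw [norm_pow]; exact pow_le_one₀ hr₀ hq.le
    simpa [r, norm_pow] using one_sub_norm_pow_le_norm_qPoch h h m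
  calc ‖HquadTerm q x y₁ y₂ z β₁ β₂ β₃ β₄ (n₁, n₂, n₃, n₄)‖
      = ‖x‖ ^ (n₁ + n₂ + n₃ + n₄) * ‖y₁‖ ^ n₃ * ‖y₂‖ ^ n₄ * ‖z‖ ^ n₂ *
          r ^ (Qform n₁ n₂ n₃ n₄ + β₁ * n₁ + β₂ * n₂ + β₃ * n₃ + β₄ * n₄) /
        (‖qPoch (q ^ 2) (q ^ 2) n₁‖ * ‖qPoch (q ^ 2) (q ^ 2) n₂‖ *
          ‖qPoch (q ^ 4) (q ^ 4) n₃‖ * ‖qPoch (q ^ 4) (q ^ 4) n₄‖) := by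
        simp only [HquadTerm, norm_div, norm_mul, norm_pow, r]
    _ ≤ ‖x‖ ^ (n₁ + n₂ + n₃ + n₄) * ‖y₁‖ ^ n₃ * ‖y₂‖ ^ n₄ * ‖z‖ ^ n₂ *
          r ^ (n₁.choose 2 + n₂.choose 2 + n₃.choose 2 + n₄.choose 2) /
        ((1 - r ^ 2) ^ n₁ * (1 - r ^ 2) ^ n₂ * (1 - r ^ 4) ^ n₃ * (1 - r ^ 4) ^ n₄) := by
        refine div_le_div₀ (by positivity) ?_ (by positivity) ?_
        · exact mul_le_mul_of_nonneg_left
            (pow_le_pow_of_le_one hr₀ hq.le (choose_two_add_le_Qform_add ..)) (by positivity)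
        · gcongr ?_ * ?_ * ?_ * ?_ <;> exact hPoch _ _
    _ = _ := by
        simp only [div_eq_mul_inv, mul_pow, inv_pow, mul_inv, pow_add]
        ring

theorem summable_HquadTerm (hq : ‖q‖ < 1) :
    Summable (HquadTerm q x y₁ y₂ z β₁ β₂ β₃ β₄) := by
  have hg (K : ℝ) : Summable fun n : ℕ => ‖K ^ n * ‖q‖ ^ n.choose 2‖ :=
    (summable_pow_mul_pow_choose_two K (norm_nonneg q) hq).abs
  refine .of_norm_bounded ((hg _).mul_norm ((hg _).mul_norm ((hg _).mul_norm (hg _)))) fun n =>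
    (norm_HquadTerm_le x y₁ y₂ z β₁ β₂ β₃ β₄ hq n).trans (Real.le_norm_self _)

theorem HquadTerm_succ₁ (hq : ‖q‖ < 1) (n₁ n₂ n₃ n₄ : ℕ) :
    HquadTerm q x y₁ y₂ z β₁ β₂ β₃ β₄ (n₁ + 1, n₂, n₃, n₄) =
      HquadTerm q x y₁ y₂ z (β₁ + 2) β₂ β₃ β₄ (n₁ + 1, n₂, n₃, n₄) +
        x * q ^ β₁ * HquadTerm q x y₁ y₂ z (β₁ + 4) (β₂ + 4) (β₃ + 4) (β₄ + 4) (n₁, n₂, n₃, n₄) := by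
  have h₁ := qPoch_pow_ne_zero hq two_ne_zero n₁
  have h₁' := qPoch_pow_ne_zero hq two_ne_zero (n₁ + 1)
  have h₂ := qPoch_pow_ne_zero hq two_ne_zero n₂
  have h₃ := qPoch_pow_ne_zero hq four_ne_zero n₃
  have h₄ := qPoch_pow_ne_zero hq four_ne_zero n₄
  rw [qPoch_succ] at h₁'
  simp only [HquadTerm, qPoch_succ, Qform_succ₁]
  rw [mul_div_assoc', div_add_div _ _ (by simp [*]) (by simp [*]),
    div_eq_div_iff (by simp [*]) (by simp [*])]
  ring

theorem HquadTerm_succ₂ (hq : ‖q‖ < 1) (n₁ n₂ n₃ n₄ : ℕ) :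
    HquadTerm q x y₁ y₂ z β₁ β₂ β₃ β₄ (n₁, n₂ + 1, n₃, n₄) =
      HquadTerm q x y₁ y₂ z β₁ (β₂ + 2) β₃ β₄ (n₁, n₂ + 1, n₃, n₄) +
        x * z * q ^ β₂ *
          HquadTerm q x y₁ y₂ z (β₁ + 4) (β₂ + 6) (β₃ + 4) (β₄ + 4) (n₁, n₂, n₃, n₄) := by
  have h₁ := qPoch_pow_ne_zero hq two_ne_zero n₁
  have h₂ := qPoch_pow_ne_zero hq two_ne_zero n₂
  have h₂' := qPoch_pow_ne_zero hq two_ne_zero (n₂ + 1)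
  have h₃ := qPoch_pow_ne_zero hq four_ne_zero n₃
  have h₄ := qPoch_pow_ne_zero hq four_ne_zero n₄
  rw [qPoch_succ] at h₂'
  simp only [HquadTerm, qPoch_succ, Qform_succ₂]
  rw [mul_div_assoc', div_add_div _ _ (by simp [*]) (by simp [*]),
    div_eq_div_iff (by simp [*]) (by simp [*])]
  ring

theorem HquadTerm_succ₃ (hq : ‖q‖ < 1) (n₁ n₂ n₃ n₄ : ℕ) :
    HquadTerm q x y₁ y₂ z β₁ β₂ β₃ β₄ (n₁, n₂, n₃ + 1, n₄) =
      HquadTerm q x y₁ y₂ z β₁ β₂ (β₃ + 4) β₄ (n₁, n₂, n₃ + 1, n₄) +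
        x * y₁ * q ^ β₃ *
          HquadTerm q x y₁ y₂ z (β₁ + 4) (β₂ + 4) (β₃ + 4) (β₄ + 4) (n₁, n₂, n₃, n₄) := by
  have h₁ := qPoch_pow_ne_zero hq two_ne_zero n₁
  have h₂ := qPoch_pow_ne_zero hq two_ne_zero n₂
  have h₃ := qPoch_pow_ne_zero hq four_ne_zero n₃
  have h₃' := qPoch_pow_ne_zero hq four_ne_zero (n₃ + 1)
  have h₄ := qPoch_pow_ne_zero hq four_ne_zero n₄
  rw [qPoch_succ] at h₃'
  simp only [HquadTerm, qPoch_succ, Qform_succ₃]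
  rw [mul_div_assoc', div_add_div _ _ (by simp [*]) (by simp [*]),
    div_eq_div_iff (by simp [*]) (by simp [*])]
  ring

theorem HquadTerm_succ₄ (hq : ‖q‖ < 1) (n₁ n₂ n₃ n₄ : ℕ) :
    HquadTerm q x y₁ y₂ z β₁ β₂ β₃ β₄ (n₁, n₂, n₃, n₄ + 1) =
      HquadTerm q x y₁ y₂ z β₁ β₂ β₃ (β₄ + 4) (n₁, n₂, n₃, n₄ + 1) +
        x * y₂ * q ^ β₄ *
          HquadTerm q x y₁ y₂ z (β₁ + 4) (β₂ + 4) (β₃ + 4) (β₄ + 8) (n₁, n₂, n₃, n₄) := by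
  have h₁ := qPoch_pow_ne_zero hq two_ne_zero n₁
  have h₂ := qPoch_pow_ne_zero hq two_ne_zero n₂
  have h₃ := qPoch_pow_ne_zero hq four_ne_zero n₃
  have h₄ := qPoch_pow_ne_zero hq four_ne_zero n₄
  have h₄' := qPoch_pow_ne_zero hq four_ne_zero (n₄ + 1)
  rw [qPoch_succ] at h₄'
  simp only [HquadTerm, qPoch_succ, Qform_succ₄]
  rw [mul_div_assoc', div_add_div _ _ (by simp [*]) (by simp [*]),
    div_eq_div_iff (by simp [*]) (by simp [*])]
  ring

theorem Hquad_shift₁ (hq : ‖q‖ < 1) :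
    Hquad q x y₁ y₂ z β₁ β₂ β₃ β₄ =
      Hquad q x y₁ y₂ z (β₁ + 2) β₂ β₃ β₄ +
        x * q ^ β₁ * Hquad q x y₁ y₂ z (β₁ + 4) (β₂ + 4) (β₃ + 4) (β₄ + 4) := by
  simp only [Hquad_eq_tsum, ← tsum_mul_left]
  refine tsum_eq_tsum_add_tsum_of_injective (i := fun n => (n.1 + 1, n.2))
    (fun _ _ h => by simpa [Prod.ext_iff] using h) (summable_HquadTerm x y₁ y₂ z _ _ _ _ hq)
    ((summable_HquadTerm x y₁ y₂ z _ _ _ _ hq).mul_left _) ?_ fun ⟨n₁, n₂, n₃, n₄⟩ =>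
      HquadTerm_succ₁ x y₁ y₂ z β₁ β₂ β₃ β₄ hq n₁ n₂ n₃ n₄
  rintro ⟨_ | n₁, n⟩ hn
  · simp [HquadTerm]
  · exact absurd ⟨(n₁, n), rfl⟩ hn

theorem Hquad_shift₂ (hq : ‖q‖ < 1) :
    Hquad q x y₁ y₂ z β₁ β₂ β₃ β₄ =
      Hquad q x y₁ y₂ z β₁ (β₂ + 2) β₃ β₄ +
        x * z * q ^ β₂ * Hquad q x y₁ y₂ z (β₁ + 4) (β₂ + 6) (β₃ + 4) (β₄ + 4) := by
  simp only [Hquad_eq_tsum, ← tsum_mul_left]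
  refine tsum_eq_tsum_add_tsum_of_injective (i := fun n => (n.1, n.2.1 + 1, n.2.2))
    (fun _ _ h => by simpa [Prod.ext_iff] using h) (summable_HquadTerm x y₁ y₂ z _ _ _ _ hq)
    ((summable_HquadTerm x y₁ y₂ z _ _ _ _ hq).mul_left _) ?_ fun ⟨n₁, n₂, n₃, n₄⟩ =>
      HquadTerm_succ₂ x y₁ y₂ z β₁ β₂ β₃ β₄ hq n₁ n₂ n₃ n₄
  rintro ⟨n₁, _ | n₂, n⟩ hn
  · simp [HquadTerm]
  · exact absurd ⟨(n₁, n₂, n), rfl⟩ hn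

theorem Hquad_shift₃ (hq : ‖q‖ < 1) :
    Hquad q x y₁ y₂ z β₁ β₂ β₃ β₄ =
      Hquad q x y₁ y₂ z β₁ β₂ (β₃ + 4) β₄ +
        x * y₁ * q ^ β₃ * Hquad q x y₁ y₂ z (β₁ + 4) (β₂ + 4) (β₃ + 4) (β₄ + 4) := by
  simp only [Hquad_eq_tsum, ← tsum_mul_left]
  refine tsum_eq_tsum_add_tsum_of_injective (i := fun n => (n.1, n.2.1, n.2.2.1 + 1, n.2.2.2))
    (fun _ _ h => by simpa [Prod.ext_iff] using h) (summable_HquadTerm x y₁ y₂ z _ _ _ _ hq)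
    ((summable_HquadTerm x y₁ y₂ z _ _ _ _ hq).mul_left _) ?_ fun ⟨n₁, n₂, n₃, n₄⟩ =>
      HquadTerm_succ₃ x y₁ y₂ z β₁ β₂ β₃ β₄ hq n₁ n₂ n₃ n₄
  rintro ⟨n₁, n₂, _ | n₃, n₄⟩ hn
  · simp [HquadTerm]
  · exact absurd ⟨(n₁, n₂, n₃, n₄), rfl⟩ hn

theorem Hquad_shift₄ (hq : ‖q‖ < 1) :
    Hquad q x y₁ y₂ z β₁ β₂ β₃ β₄ =
      Hquad q x y₁ y₂ z β₁ β₂ β₃ (β₄ + 4) +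
        x * y₂ * q ^ β₄ * Hquad q x y₁ y₂ z (β₁ + 4) (β₂ + 4) (β₃ + 4) (β₄ + 8) := by
  simp only [Hquad_eq_tsum, ← tsum_mul_left]
  refine tsum_eq_tsum_add_tsum_of_injective (i := fun n => (n.1, n.2.1, n.2.2.1, n.2.2.2 + 1))
    (fun _ _ h => by simpa [Prod.ext_iff] using h) (summable_HquadTerm x y₁ y₂ z _ _ _ _ hq)
    ((summable_HquadTerm x y₁ y₂ z _ _ _ _ hq).mul_left _) ?_ fun ⟨n₁, n₂, n₃, n₄⟩ =>
      HquadTerm_succ₄ x y₁ y₂ z β₁ β₂ β₃ β₄ hq n₁ n₂ n₃ n₄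
  rintro ⟨n₁, n₂, n₃, _ | n₄⟩ hn
  · simp [HquadTerm]
  · exact absurd ⟨(n₁, n₂, n₃, n₄), rfl⟩ hn

end HquadTerm

/-- The recurrences for `H` needed in the proof of Theorem 5.1 (rows of (5.4)). -/
theorem Hquad_recurrences (q x y₁ y₂ z : ℂ) (hq : ‖q‖ < 1) :
    Hquad q x y₁ y₂ z 1 1 2 4 =
        Hquad q x y₁ y₂ z 5 5 6 8 + x * (1 + z) * q * Hquad q x y₁ y₂ z 5 7 6 8 +
          x * y₁ * q ^ 2 * Hquad q x y₁ y₂ z 7 7 6 8 +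
          x * (1 + z) * q ^ 3 * Hquad q x y₁ y₂ z 7 9 10 8 +
          x * y₂ * q ^ 4 * Hquad q x y₁ y₂ z 9 9 10 12 ∧
      Hquad q x y₁ y₂ z 1 3 2 4 =
        Hquad q x y₁ y₂ z 5 5 6 8 + x * q * Hquad q x y₁ y₂ z 5 7 6 8 +
          x * y₁ * q ^ 2 * Hquad q x y₁ y₂ z 7 7 6 8 +
          x * (1 + z) * q ^ 3 * Hquad q x y₁ y₂ z 7 9 10 8 +
          x * y₂ * q ^ 4 * Hquad q x y₁ y₂ z 9 9 10 12 ∧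
      Hquad q x y₁ y₂ z 3 3 2 4 =
        Hquad q x y₁ y₂ z 5 5 6 8 +
          x * y₁ * q ^ 2 * Hquad q x y₁ y₂ z 7 7 6 8 +
          x * (1 + z) * q ^ 3 * Hquad q x y₁ y₂ z 7 9 10 8 +
          x * y₂ * q ^ 4 * Hquad q x y₁ y₂ z 9 9 10 12 ∧
      Hquad q x y₁ y₂ z 3 5 6 4 =
        Hquad q x y₁ y₂ z 5 5 6 8 + x * q ^ 3 * Hquad q x y₁ y₂ z 7 9 10 8 +
          x * y₂ * q ^ 4 * Hquad q x y₁ y₂ z 9 9 10 12 := by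
  have h₁ := Hquad_shift₂ x y₁ y₂ z 1 1 2 4 hq
  have h₂ := Hquad_shift₁ x y₁ y₂ z 1 3 2 4 hq
  have h₃ := Hquad_shift₃ x y₁ y₂ z 3 3 2 4 hq
  have h₄ := Hquad_shift₂ x y₁ y₂ z 3 3 6 4 hq
  have h₅ := Hquad_shift₁ x y₁ y₂ z 3 5 6 4 hq
  have h₆ := Hquad_shift₄ x y₁ y₂ z 5 5 6 4 hq
  norm_num at h₁ h₂ h₃ h₄ h₅ h₆
  refine ⟨?_, ?_, ?_, ?_⟩
  · linear_combination h₁ + h₂ + h₃ + h₄ + h₅ + h₆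
  · linear_combination h₂ + h₃ + h₄ + h₅ + h₆
  · linear_combination h₃ + h₄ + h₅ + h₆
  · linear_combination h₅ + h₆
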